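/- For the 6-dimensional quadratic Lie superalgebra g₆ with even part spanned by X₀, Y₀, odd part spanned by X₁, Y₁, Z₁, T₁, and nonzero brackets [Z₁,T₁] = -X₀, [Y₀,Z₁] = -Y₁, [Y₀,T₁] = -X₁, the second cohomology group H²(g₆, ℂ) with trivial coefficients is 6-dimensional. -/

import Mathlib

/-- A bilinear scalar-valued map, given as a bare function. -/
def IsBilinC {M N : Type*} [AddCommGroup M] [Module ℂ M] [AddCommGroup N] [Module ℂ N]
    (f : M → N → ℂ) : Prop :=
  (∀ (c : ℂ) (x y : M) (z : N), f (c • x + y) z = c * f x z + f y z) ∧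
  (∀ (c : ℂ) (x : M) (y z : N), f x (c • y + z) = c * f x y + f x z)

/-- A linear scalar-valued map, given as a bare function. -/
def IsLinC {M : Type*} [AddCommGroup M] [Module ℂ M] (f : M → ℂ) : Prop :=
  ∀ (c : ℂ) (x y : M), f (c • x + y) = c * f x + f y

/- The elementary quadratic Lie superalgebra `g₆ˢ`: even part `ℂX₀ ⊕ ℂY₀`
(coordinates `(A.1, A.2)`), odd part `ℂX₁ ⊕ ℂY₁ ⊕ ℂZ₁ ⊕ ℂT₁` (coordinates
`U 0, U 1, U 2, U 3`), nonzero brackets `[Z₁,T₁] = -X₀`, `[Y₀,Z₁] = -Y₁`,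
`[Y₀,T₁] = -X₁`. -/

/-- even-even bracket of `g₆` (zero). -/
def br00 : ℂ × ℂ → ℂ × ℂ → ℂ × ℂ := fun _ _ => (0, 0)

/-- even-odd bracket of `g₆`: `[Y₀,Z₁] = -Y₁`, `[Y₀,T₁] = -X₁`. -/
noncomputable def br01 : ℂ × ℂ → (Fin 4 → ℂ) → (Fin 4 → ℂ) :=
  fun A U => ![-(A.2 * U 3), -(A.2 * U 2), 0, 0]

/-- odd-odd bracket of `g₆`: `[Z₁,T₁] = -X₀` (symmetric). -/
def br11 : (Fin 4 → ℂ) → (Fin 4 → ℂ) → ℂ × ℂ :=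
  fun U V => (-(U 2 * V 3) - U 3 * V 2, 0)

/-- A 2-cocycle of `g₆` with trivial coefficients. -/
def IsCocycle2 (w0 : ℂ × ℂ → ℂ × ℂ → ℂ) (wm : ℂ × ℂ → (Fin 4 → ℂ) → ℂ)
    (w1 : (Fin 4 → ℂ) → (Fin 4 → ℂ) → ℂ) : Prop :=
  IsBilinC w0 ∧ IsBilinC wm ∧ IsBilinC w1 ∧
  (∀ A B, w0 A B = - w0 B A) ∧ (∀ U V, w1 U V = w1 V U) ∧
  (∀ A B C, - w0 (br00 A B) C + w0 (br00 A C) B + w0 A (br00 B C) = 0) ∧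
  (∀ A B U, - wm (br00 A B) U - wm B (br01 A U) + wm A (br01 B U) = 0) ∧
  (∀ A U V, - w1 (br01 A U) V - w1 (br01 A V) U + w0 A (br11 U V) = 0) ∧
  (∀ U V W, wm (br11 U V) W + wm (br11 U W) V + wm (br11 V W) U = 0)

/-- A 2-coboundary of `g₆`. -/
def IsCoboundary2 (w0 : ℂ × ℂ → ℂ × ℂ → ℂ) (wm : ℂ × ℂ → (Fin 4 → ℂ) → ℂ)
    (w1 : (Fin 4 → ℂ) → (Fin 4 → ℂ) → ℂ) : Prop :=
  ∃ (f0 : ℂ × ℂ → ℂ) (f1 : (Fin 4 → ℂ) → ℂ), IsLinC f0 ∧ IsLinC f1 ∧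
    (∀ A B, w0 A B = - f0 (br00 A B)) ∧
    (∀ A U, wm A U = - f1 (br01 A U)) ∧
    (∀ U V, w1 U V = - f0 (br11 U V))

/-! Write a 2-cochain as `(w₀, wₘ, w₁) ∈ Λ²g₀* ⊕ g₀* ⊗ g₁* ⊕ S²g₁*`. The cocycle condition on
three odd vectors, taken at `(Z₁, T₁, ·)`, forces `wₘ(X₀, ·) = 0`, so `wₘ = Y₀* ⊗ φ`; the
even-odd-odd condition at `Y₀` kills five of the ten coordinates of `w₁` and ties
`w₁(Y₁, T₁) + w₁(X₁, Z₁)` to `w₀(X₀, Y₀)`. So the cocycles form a 9-dimensional space. A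
coboundary `-f ∘ [·,·]` only sees `f` on `[g, g] = ⟨X₀, X₁, Y₁⟩`, so the coboundaries are spanned
by the `Z₁T₁`-coordinate of `w₁` and the `Z₁`-, `T₁`-coordinates of `φ`; the six remaining
coordinates give a basis of `H²`. -/

namespace IsLinC

variable {M : Type*} [AddCommGroup M] [Module ℂ M] {f : M → ℂ}

theorem map_zero (hf : IsLinC f) : f 0 = 0 := by
  simpa using hf (-1) 0 0

theorem map_add (hf : IsLinC f) (x y : M) : f (x + y) = f x + f y := by
  simpa using hf 1 x y

theorem map_smul (hf : IsLinC f) (c : ℂ) (x : M) : f (c • x) = c * f x := by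
  simpa [hf.map_zero] using hf c x 0

def toLinearMap (hf : IsLinC f) : M →ₗ[ℂ] ℂ where
  toFun := f
  map_add' := hf.map_add
  map_smul' := hf.map_smul

theorem apply_eq_sum_single {ι : Type*} [Fintype ι] [DecidableEq ι] {f : (ι → ℂ) → ℂ}
    (hf : IsLinC f) (U : ι → ℂ) : f U = ∑ j, U j * f (Pi.single j 1) := by
  calc f U
      _ = f (∑ j, U j • Pi.single j 1) := by
        simp_rw [← Pi.single_smul', smul_eq_mul, mul_one, Finset.univ_sum_single]
      _ = ∑ j, f (U j • Pi.single j 1) := map_sum hf.toLinearMap _ _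
      _ = ∑ j, U j * f (Pi.single j 1) := by simp only [hf.map_smul]

theorem apply_prod_eq {f : ℂ × ℂ → ℂ} (hf : IsLinC f) (A : ℂ × ℂ) :
    f A = A.1 * f (1, 0) + A.2 * f (0, 1) := by
  rw [← hf.map_smul, ← hf.map_smul, ← hf.map_add]
  simp

theorem apply_br01 {f : (Fin 4 → ℂ) → ℂ} (hf : IsLinC f) (A : ℂ × ℂ) (U : Fin 4 → ℂ) :
    f (br01 A U) = -(A.2 * (U 3 * f (Pi.single 0 1) + U 2 * f (Pi.single 1 1))) := by
  rw [hf.apply_eq_sum_single]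
  simp only [br01, Fin.sum_univ_four, Matrix.cons_val]
  ring

theorem apply_br11 {f : ℂ × ℂ → ℂ} (hf : IsLinC f) (U V : Fin 4 → ℂ) :
    f (br11 U V) = -(U 2 * V 3 + U 3 * V 2) * f (1, 0) := by
  rw [hf.apply_prod_eq]
  simp only [br11]
  ring

end IsLinC

namespace IsBilinC

variable {M N : Type*} [AddCommGroup M] [Module ℂ M] [AddCommGroup N] [Module ℂ N]
  {f : M → N → ℂ}

theorem left (hf : IsBilinC f) (y : N) : IsLinC (f · y) :=
  fun c x x' => hf.1 c x x' y

theorem right (hf : IsBilinC f) (x : M) : IsLinC (f x) :=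
  fun c y y' => hf.2 c x y y'

theorem apply_eq_sum_single {ι κ : Type*} [Fintype ι] [DecidableEq ι] [Fintype κ]
    [DecidableEq κ] {f : (ι → ℂ) → (κ → ℂ) → ℂ} (hf : IsBilinC f) (U : ι → ℂ) (V : κ → ℂ) :
    f U V = ∑ i, ∑ j, U i * V j * f (Pi.single i 1) (Pi.single j 1) := by
  rw [(hf.left V).apply_eq_sum_single U]
  simp_rw [(hf.right _).apply_eq_sum_single V, Finset.mul_sum, mul_assoc]

theorem apply_prod_of_antisymm {f : ℂ × ℂ → ℂ × ℂ → ℂ} (hf : IsBilinC f)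
    (hanti : ∀ A B, f A B = -f B A) (A B : ℂ × ℂ) :
    f A B = (A.1 * B.2 - A.2 * B.1) * f (1, 0) (0, 1) := by
  have hXX : f (1, 0) (1, 0) = 0 := by linear_combination hanti (1, 0) (1, 0) / 2
  have hYY : f (0, 1) (0, 1) = 0 := by linear_combination hanti (0, 1) (0, 1) / 2
  rw [(hf.left B).apply_prod_eq, (hf.right _).apply_prod_eq B, (hf.right _).apply_prod_eq B]
  linear_combination A.1 * B.1 * hXX + A.2 * B.2 * hYY + A.2 * B.1 * hanti (0, 1) (1, 0)

end IsBilinC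

/- In the dual bases, writing `a·b` for `a ⊗ b + b ⊗ a`: `X₀* ∧ Y₀* - Y₁*·T₁*`,
`X₁*·Z₁* - Y₁*·T₁*`, `Z₁* ⊗ Z₁*`, `T₁* ⊗ T₁*`, `Y₀* ⊗ X₁*` and `Y₀* ⊗ Y₁*`. -/
def basisW0 : Fin 6 → ℂ × ℂ → ℂ × ℂ → ℂ :=
  ![fun A B => A.1 * B.2 - A.2 * B.1, 0, 0, 0, 0, 0]

def basisWm : Fin 6 → ℂ × ℂ → (Fin 4 → ℂ) → ℂ :=
  ![0, 0, 0, 0, fun A U => A.2 * U 0, fun A U => A.2 * U 1]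

def basisW1 : Fin 6 → (Fin 4 → ℂ) → (Fin 4 → ℂ) → ℂ :=
  ![fun U V => -(U 1 * V 3 + U 3 * V 1),
    fun U V => U 0 * V 2 + U 2 * V 0 - (U 1 * V 3 + U 3 * V 1),
    fun U V => U 2 * V 2, fun U V => U 3 * V 3, 0, 0]

theorem isCocycle2_basis (i : Fin 6) : IsCocycle2 (basisW0 i) (basisWm i) (basisW1 i) := by
  refine ⟨⟨?_, ?_⟩, ⟨?_, ?_⟩, ⟨?_, ?_⟩, ?_, ?_, ?_, ?_, ?_, ?_⟩ <;>
  · intros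
    fin_cases i <;> simp [basisW0, basisWm, basisW1, br00, br01, br11] <;> ring

namespace IsCocycle2

variable {w0 : ℂ × ℂ → ℂ × ℂ → ℂ} {wm : ℂ × ℂ → (Fin 4 → ℂ) → ℂ}
  {w1 : (Fin 4 → ℂ) → (Fin 4 → ℂ) → ℂ}

theorem w0_eq (h : IsCocycle2 w0 wm w1) (A B : ℂ × ℂ) :
    w0 A B = (A.1 * B.2 - A.2 * B.1) * w0 (1, 0) (0, 1) :=
  h.1.apply_prod_of_antisymm h.2.2.2.1 A B

theorem wm_fst_eq_zero (h : IsCocycle2 w0 wm w1) (U : Fin 4 → ℂ) : wm (1, 0) U = 0 := by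
  obtain ⟨-, hm, -, -, -, -, -, -, hodd⟩ := h
  have hZT (W : Fin 4 → ℂ) :
      wm (1, 0) W + W 3 * wm (1, 0) (Pi.single 3 1) + W 2 * wm (1, 0) (Pi.single 2 1) = 0 := by
    have := hodd (Pi.single 2 1) (Pi.single 3 1) W
    simp only [(hm.left _).apply_br11, Pi.single_eq_same,
      Pi.single_eq_of_ne (by decide : (2 : Fin 4) ≠ 3),
      Pi.single_eq_of_ne (by decide : (3 : Fin 4) ≠ 2)] at this
    linear_combination -this
  have hZ : wm (1, 0) (Pi.single 2 1) = 0 := by simpa using hZT (Pi.single 2 1)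
  have hT : wm (1, 0) (Pi.single 3 1) = 0 := by simpa using hZT (Pi.single 3 1)
  linear_combination hZT U - U 3 * hT - U 2 * hZ

theorem wm_eq (h : IsCocycle2 w0 wm w1) (A : ℂ × ℂ) (U : Fin 4 → ℂ) :
    wm A U = A.2 * wm (0, 1) U := by
  rw [(h.2.1.left U).apply_prod_eq, h.wm_fst_eq_zero]
  ring

theorem w1_condition (h : IsCocycle2 w0 wm w1) (U V : Fin 4 → ℂ) :
    U 3 * w1 (Pi.single 0 1) V + U 2 * w1 (Pi.single 1 1) V
      + (V 3 * w1 (Pi.single 0 1) U + V 2 * w1 (Pi.single 1 1) U)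
      = -((U 2 * V 3 + U 3 * V 2) * w0 (1, 0) (0, 1)) := by
  obtain ⟨h0, -, h1, hanti, -, -, -, hmix, -⟩ := h
  have := hmix (0, 1) U V
  rw [(h1.left V).apply_br01, (h1.left U).apply_br01, (h0.right _).apply_br11,
    hanti (0, 1)] at this
  linear_combination this

theorem w1_eq (h : IsCocycle2 w0 wm w1) (U V : Fin 4 → ℂ) :
    w1 U V = (U 0 * V 2 + U 2 * V 0) * w1 (Pi.single 0 1) (Pi.single 2 1)
      - (U 1 * V 3 + U 3 * V 1) * (w1 (Pi.single 0 1) (Pi.single 2 1) + w0 (1, 0) (0, 1))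
      + U 2 * V 2 * w1 (Pi.single 2 1) (Pi.single 2 1)
      + U 3 * V 3 * w1 (Pi.single 3 1) (Pi.single 3 1)
      + (U 2 * V 3 + U 3 * V 2) * w1 (Pi.single 2 1) (Pi.single 3 1) := by
  have hcond (i j : Fin 4) := h.w1_condition (Pi.single i 1) (Pi.single j 1)
  obtain ⟨-, -, h1, -, hsymm', -⟩ := h
  have hsymm (i j : Fin 4) := hsymm' (Pi.single i 1) (Pi.single j 1)
  have e00 : w1 (Pi.single 0 1) (Pi.single 0 1) = 0 := by simpa using hcond 0 3
  have e01 : w1 (Pi.single 0 1) (Pi.single 1 1) = 0 := by simpa using hcond 1 3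
  have e11 : w1 (Pi.single 1 1) (Pi.single 1 1) = 0 := by simpa using hcond 1 2
  have e03 : w1 (Pi.single 0 1) (Pi.single 3 1) = 0 := by simpa using hcond 3 3
  have e12 : w1 (Pi.single 1 1) (Pi.single 2 1) = 0 := by simpa using hcond 2 2
  have e13 : w1 (Pi.single 1 1) (Pi.single 3 1) + w1 (Pi.single 0 1) (Pi.single 2 1)
      = -w0 (1, 0) (0, 1) := by simpa using hcond 2 3
  rw [h1.apply_eq_sum_single]
  simp only [Fin.sum_univ_four]
  linear_combination (U 0 * V 0) * e00 + (U 0 * V 1 + U 1 * V 0) * e01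
    + (U 1 * V 0) * hsymm 1 0 + (U 1 * V 1) * e11 + (U 0 * V 3 + U 3 * V 0) * e03
    + (U 3 * V 0) * hsymm 3 0 + (U 1 * V 2 + U 2 * V 1) * e12 + (U 2 * V 1) * hsymm 2 1
    + (U 2 * V 0) * hsymm 2 0 + (U 3 * V 1) * hsymm 3 1 + (U 3 * V 2) * hsymm 3 2
    + (U 1 * V 3 + U 3 * V 1) * e13

theorem exists_isCoboundary2_sub_basis (h : IsCocycle2 w0 wm w1) :
    ∃ c : Fin 6 → ℂ,
      IsCoboundary2 (fun A B => w0 A B - ∑ i, c i * basisW0 i A B)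
        (fun A U => wm A U - ∑ i, c i * basisWm i A U)
        (fun U V => w1 U V - ∑ i, c i * basisW1 i U V) := by
  refine ⟨![w0 (1, 0) (0, 1), w1 (Pi.single 0 1) (Pi.single 2 1),
      w1 (Pi.single 2 1) (Pi.single 2 1), w1 (Pi.single 3 1) (Pi.single 3 1),
      wm (0, 1) (Pi.single 0 1), wm (0, 1) (Pi.single 1 1)],
    fun A => A.1 * w1 (Pi.single 2 1) (Pi.single 3 1),
    fun U => U 0 * wm (0, 1) (Pi.single 3 1) + U 1 * wm (0, 1) (Pi.single 2 1),
    fun c x y => by simp only [Prod.fst_add, Prod.smul_fst, smul_eq_mul]; ring,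
    fun c x y => by simp only [Pi.add_apply, Pi.smul_apply, smul_eq_mul]; ring,
    fun A B => ?_, fun A U => ?_, fun U V => ?_⟩
  · simp only [h.w0_eq A B, basisW0, br00, Fin.sum_univ_six, Matrix.cons_val, Pi.zero_apply]
    ring
  · dsimp only
    rw [h.wm_eq, (h.2.1.right _).apply_eq_sum_single U]
    simp only [basisWm, br01, Fin.sum_univ_six, Fin.sum_univ_four, Matrix.cons_val,
      Pi.zero_apply]
    ring
  · dsimp only
    rw [h.w1_eq]
    simp only [basisW1, br11, Fin.sum_univ_six, Matrix.cons_val, Pi.zero_apply]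
    ring

end IsCocycle2

theorem eq_zero_of_isCoboundary2_basis (c : Fin 6 → ℂ)
    (h : IsCoboundary2 (fun A B => ∑ i, c i * basisW0 i A B)
      (fun A U => ∑ i, c i * basisWm i A U) (fun U V => ∑ i, c i * basisW1 i U V)) :
    c = 0 := by
  obtain ⟨f0, f1, hf0, hf1, h0, hm, h1⟩ := h
  have hbr11 (U V : Fin 4 → ℂ) := hf0.apply_br11 U V
  have hbr01 (U : Fin 4 → ℂ) := hf1.apply_br01 (0, 1) U
  have hc0 : c 0 = 0 := by
    simpa [basisW0, Fin.sum_univ_six, br00, Prod.mk_zero_zero, hf0.map_zero] using h0 (1, 0) (0, 1)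
  have hc1 : c 1 = 0 := by
    simpa [basisW1, Fin.sum_univ_six, hbr11] using h1 (Pi.single 0 1) (Pi.single 2 1)
  have hc2 : c 2 = 0 := by
    simpa [basisW1, Fin.sum_univ_six, hbr11] using h1 (Pi.single 2 1) (Pi.single 2 1)
  have hc3 : c 3 = 0 := by
    simpa [basisW1, Fin.sum_univ_six, hbr11] using h1 (Pi.single 3 1) (Pi.single 3 1)
  have hc4 : c 4 = 0 := by
    simpa [basisWm, Fin.sum_univ_six, hbr01] using hm (0, 1) (Pi.single 0 1)
  have hc5 : c 5 = 0 := by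
    simpa [basisWm, Fin.sum_univ_six, hbr01] using hm (0, 1) (Pi.single 1 1)
  ext i
  fin_cases i <;> simp [hc0, hc1, hc2, hc3, hc4, hc5]

/-- The second cohomology group `H²(g₆ˢ, ℂ)` with trivial coefficients is
6-dimensional: there are six cocycles which are linearly independent modulo
coboundaries and span the cocycles modulo coboundaries. -/
theorem second_cohomology_g6_dim_six :
    ∃ (W0 : Fin 6 → ℂ × ℂ → ℂ × ℂ → ℂ) (Wm : Fin 6 → ℂ × ℂ → (Fin 4 → ℂ) → ℂ)
      (W1 : Fin 6 → (Fin 4 → ℂ) → (Fin 4 → ℂ) → ℂ),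
      (∀ i, IsCocycle2 (W0 i) (Wm i) (W1 i)) ∧
      (∀ w0 wm w1, IsCocycle2 w0 wm w1 → ∃ c : Fin 6 → ℂ,
        IsCoboundary2 (fun A B => w0 A B - ∑ i, c i * W0 i A B)
          (fun A U => wm A U - ∑ i, c i * Wm i A U)
          (fun U V => w1 U V - ∑ i, c i * W1 i U V)) ∧
      (∀ c : Fin 6 → ℂ,
        IsCoboundary2 (fun A B => ∑ i, c i * W0 i A B)
          (fun A U => ∑ i, c i * Wm i A U)
          (fun U V => ∑ i, c i * W1 i U V) → c = 0) :=
  ⟨basisW0, basisWm, basisW1, isCocycle2_basis,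
    fun _ _ _ h => h.exists_isCoboundary2_sub_basis, eq_zero_of_isCoboundary2_basis⟩
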